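/- The multiplication map induces a well-defined ℂ-linear isomorphism H(Ω₊) ⊗_ℂ H(Ω₋) → H(Ω), [ω₊] ⊗ [ω₋] ↦ [ω₊ω₋], where H denotes the quotient of the kernel of d by its image on the respective subalgebra (Künneth formula for the D = 2 supersymmetry algebra cohomology differential). -/

import Mathlib

/-!
Künneth formula for the D = 2 supersymmetry algebra cohomology.
`Ω₊` is modelled by pairs `(a₀, a₁)` of polynomials in `ψ₁,…,ψ_{N₊}`
(representing `a₀ + c̃₁a₁`), `Ω₋` by pairs of polynomials in `χ₁,…,χ_{N₋}`
(representing `b₀ + c̃₂b₁`), and the multiplication map `Ω₊ × Ω₋ → Ω` is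
`(a₀ + c̃₁a₁)(b₀ + c̃₂b₁) = a₀b₀ + c̃₁a₁b₀ + c̃₂a₀b₁ + c̃₁c̃₂a₁b₁`.
-/

open MvPolynomial

noncomputable section

/-- `ℂ[ψ₁,…,ψ_{N₊}]`. -/
abbrev Rp (Np : ℕ) : Type := MvPolynomial (Fin Np) ℂ

/-- `ℂ[χ₁,…,χ_{N₋}]`. -/
abbrev Rm (Nm : ℕ) : Type := MvPolynomial (Fin Nm) ℂ

/-- `ℂ[ψ₁,…,ψ_{N₊}, χ₁,…,χ_{N₋}]`. -/
abbrev R2 (Np Nm : ℕ) : Type := MvPolynomial (Fin Np ⊕ Fin Nm) ℂ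

/-- `Ω₊`: free module with basis `{1, c̃₁}` over `ℂ[ψ₁,…,ψ_{N₊}]`. -/
abbrev Omp (Np : ℕ) : Type := Fin 2 → Rp Np

/-- `Ω₋`: free module with basis `{1, c̃₂}` over `ℂ[χ₁,…,χ_{N₋}]`. -/
abbrev Omm (Nm : ℕ) : Type := Fin 2 → Rm Nm

/-- `Ω`: free module with basis `{1, c̃₁, c̃₂, c̃₁c̃₂}` over `R2`. -/
abbrev Om2 (Np Nm : ℕ) : Type := Fin 4 → R2 Np Nm

/-- `P = Σ ψᵢ²` in `Ω₊`. -/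
def Ppl (Np : ℕ) : Rp Np := ∑ i, X i ^ 2

/-- `Q = Σ χᵢ²` in `Ω₋`. -/
def Qmi (Nm : ℕ) : Rm Nm := ∑ i, X i ^ 2

/-- `P = Σ ψᵢ²` in `Ω`. -/
def P2 (Np Nm : ℕ) : R2 Np Nm := ∑ i : Fin Np, X (Sum.inl i) ^ 2

/-- `Q = Σ χᵢ²` in `Ω`. -/
def Q2 (Np Nm : ℕ) : R2 Np Nm := ∑ i : Fin Nm, X (Sum.inr i) ^ 2

lemma renP (Np Nm : ℕ) :
    rename (Sum.inl : Fin Np → Fin Np ⊕ Fin Nm) (Ppl Np) = P2 Np Nm := by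
  simp [Ppl, P2]

lemma renQ (Np Nm : ℕ) :
    rename (Sum.inr : Fin Nm → Fin Np ⊕ Fin Nm) (Qmi Nm) = Q2 Np Nm := by
  simp [Qmi, Q2]

/-- The restriction of `d` to `Ω₊`: `d(a₀ + c̃₁a₁) = Pa₁`. -/
def dpL (Np : ℕ) : Omp Np →ₗ[ℂ] Omp Np where
  toFun ω := ![Ppl Np * ω 1, 0]
  map_add' a b := by
    funext k
    fin_cases k <;>
      simp [Matrix.cons_val_zero, Matrix.cons_val_one, Matrix.head_cons, mul_add]
  map_smul' c a := by
    funext k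
    fin_cases k <;>
      simp [Matrix.cons_val_zero, Matrix.cons_val_one, Matrix.head_cons, mul_smul_comm]

/-- The restriction of `d` to `Ω₋`: `d(b₀ + c̃₂b₁) = Qb₁`. -/
def dmL (Nm : ℕ) : Omm Nm →ₗ[ℂ] Omm Nm where
  toFun ω := ![Qmi Nm * ω 1, 0]
  map_add' a b := by
    funext k
    fin_cases k <;>
      simp [Matrix.cons_val_zero, Matrix.cons_val_one, Matrix.head_cons, mul_add]
  map_smul' c a := by
    funext k
    fin_cases k <;>
      simp [Matrix.cons_val_zero, Matrix.cons_val_one, Matrix.head_cons, mul_smul_comm]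

/-- The differential on `Ω`:
`d(ω₀ + c̃₁ω₁ + c̃₂ω₂ + c̃₁c̃₂ω₃) = Pω₁ + Qω₂ + (Pc̃₂ − Qc̃₁)ω₃`. -/
def d2L (Np Nm : ℕ) : Om2 Np Nm →ₗ[ℂ] Om2 Np Nm where
  toFun ω := ![P2 Np Nm * ω 1 + Q2 Np Nm * ω 2, -(Q2 Np Nm * ω 3), P2 Np Nm * ω 3, 0]
  map_add' a b := by
    funext k
    fin_cases k <;>
      simp [Matrix.cons_val_zero, Matrix.cons_val_one, Matrix.head_cons, mul_add] <;>
      ring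
  map_smul' c a := by
    funext k
    fin_cases k <;>
      simp [Matrix.cons_val_zero, Matrix.cons_val_one, Matrix.head_cons, mul_smul_comm,
        smul_add]

/-- The multiplication map `Ω₊ × Ω₋ → Ω`,
`(a₀ + c̃₁a₁)(b₀ + c̃₂b₁) = a₀b₀ + c̃₁a₁b₀ + c̃₂a₀b₁ + c̃₁c̃₂a₁b₁`. -/
def mul2 {Np Nm : ℕ} (a : Omp Np) (b : Omm Nm) : Om2 Np Nm :=
  ![rename Sum.inl (a 0) * rename Sum.inr (b 0),
    rename Sum.inl (a 1) * rename Sum.inr (b 0),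
    rename Sum.inl (a 0) * rename Sum.inr (b 1),
    rename Sum.inl (a 1) * rename Sum.inr (b 1)]

/-- The product of two cocycles is a cocycle. -/
lemma mul2_ker {Np Nm : ℕ} {a : Omp Np} {b : Omm Nm}
    (ha : dpL Np a = 0) (hb : dmL Nm b = 0) : d2L Np Nm (mul2 a b) = 0 := by
  have ha1 : Ppl Np * a 1 = 0 := by simpa [dpL] using congrFun ha 0
  have hb1 : Qmi Nm * b 1 = 0 := by simpa [dmL] using congrFun hb 0
  have e1 : ∀ y : Rm Nm,
      P2 Np Nm * (rename Sum.inl (a 1) * rename Sum.inr y) = 0 := by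
    intro y
    rw [← mul_assoc, ← renP Np Nm, ← map_mul, ha1, map_zero, zero_mul]
  have e2 : ∀ x : Rp Np,
      Q2 Np Nm * (rename Sum.inl x * rename Sum.inr (b 1)) = 0 := by
    intro x
    rw [mul_left_comm, ← renQ Np Nm, ← map_mul, hb1, map_zero, mul_zero]
  funext k
  fin_cases k <;>
    simp [d2L, mul2, Matrix.cons_val_zero, Matrix.cons_val_one, Matrix.head_cons, e1, e2]

/-- The image of `d` on `Ω₊`, as a submodule of the kernel. -/
def BsubP (Np : ℕ) : Submodule ℂ (LinearMap.ker (dpL Np)) :=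
  Submodule.comap (LinearMap.ker (dpL Np)).subtype (LinearMap.range (dpL Np))

/-- `H(Ω₊) = ker d / im d` on `Ω₊`. -/
def Hp (Np : ℕ) : Type := LinearMap.ker (dpL Np) ⧸ BsubP Np

noncomputable instance (Np : ℕ) : AddCommGroup (Hp Np) := Submodule.Quotient.addCommGroup _
instance (Np : ℕ) : Module ℂ (Hp Np) := Submodule.Quotient.module _

/-- The image of `d` on `Ω₋`, as a submodule of the kernel. -/
def BsubM (Nm : ℕ) : Submodule ℂ (LinearMap.ker (dmL Nm)) :=
  Submodule.comap (LinearMap.ker (dmL Nm)).subtype (LinearMap.range (dmL Nm))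

/-- `H(Ω₋) = ker d / im d` on `Ω₋`. -/
def Hm (Nm : ℕ) : Type := LinearMap.ker (dmL Nm) ⧸ BsubM Nm

noncomputable instance (Nm : ℕ) : AddCommGroup (Hm Nm) := Submodule.Quotient.addCommGroup _
instance (Nm : ℕ) : Module ℂ (Hm Nm) := Submodule.Quotient.module _

/-- The image of `d` on `Ω`, as a submodule of the kernel. -/
def Bsub2 (Np Nm : ℕ) : Submodule ℂ (LinearMap.ker (d2L Np Nm)) :=
  Submodule.comap (LinearMap.ker (d2L Np Nm)).subtype (LinearMap.range (d2L Np Nm))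

/-- `H(Ω) = ker d / im d`. -/
def H2 (Np Nm : ℕ) : Type := LinearMap.ker (d2L Np Nm) ⧸ Bsub2 Np Nm

noncomputable instance (Np Nm : ℕ) : AddCommGroup (H2 Np Nm) :=
  Submodule.Quotient.addCommGroup _
instance (Np Nm : ℕ) : Module ℂ (H2 Np Nm) := Submodule.Quotient.module _

/-- The cohomology class of a cocycle in `Ω₊`. -/
def clsp {Np : ℕ} (x : Omp Np) (hx : dpL Np x = 0) : Hp Np :=
  Submodule.Quotient.mk ⟨x, LinearMap.mem_ker.mpr hx⟩

/-- The cohomology class of a cocycle in `Ω₋`. -/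
def clsm {Nm : ℕ} (x : Omm Nm) (hx : dmL Nm x = 0) : Hm Nm :=
  Submodule.Quotient.mk ⟨x, LinearMap.mem_ker.mpr hx⟩

/-- The cohomology class of a cocycle in `Ω`. -/
def cls2 {Np Nm : ℕ} (x : Om2 Np Nm) (hx : d2L Np Nm x = 0) : H2 Np Nm :=
  Submodule.Quotient.mk ⟨x, LinearMap.mem_ker.mpr hx⟩

/-!
Over a field, multiplication by `P` has a generalized inverse `σ` (`PσP = P`), which gives a
contraction of `Ω₊`: a projection `π₊` with `dπ₊ = π₊d = 0` and a homotopy `h₊` with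
`π₊ + dh₊ + h₊d = 1`; likewise for `Ω₋`. As complexes `Ω ≅ Ω₊ ⊗ Ω₋`, with the Koszul sign given
by the parity `ε` of `Ω₊`, and `h₊ ⊗ 1 + επ₊ ⊗ h₋` is a homotopy from `1` to `π₊ ⊗ π₋`. Hence
`x ⊗ y ↦ [π₊ x] ⊗ [π₋ y]` descends to an inverse of `[ω₊] ⊗ [ω₋] ↦ [ω₊ω₋]`.
-/

open TensorProduct

section HomologicalAlgebra

variable {R : Type*} [CommRing R] {V W U : Type*}
  [AddCommGroup V] [Module R V] [AddCommGroup W] [Module R W] [AddCommGroup U] [Module R U]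

abbrev Cohomology (d : V →ₗ[R] V) : Type _ :=
  LinearMap.ker d ⧸ (LinearMap.range d).comap (LinearMap.ker d).subtype

structure Contraction (d : V →ₗ[R] V) where
  proj : V →ₗ[R] V
  htpy : V →ₗ[R] V
  d_proj : ∀ v, d (proj v) = 0
  proj_d : ∀ v, proj (d v) = 0
  proj_add_d_htpy_add_htpy_d : ∀ v, proj v + d (htpy v) + htpy (d v) = v

namespace Contraction

variable {d : V →ₗ[R] V} (c : Contraction d)

def toCohomology : V →ₗ[R] Cohomology d :=
  Submodule.mkQ _ ∘ₗ c.proj.codRestrict (LinearMap.ker d) c.d_proj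

lemma toCohomology_apply (v : V) :
    c.toCohomology v = Submodule.Quotient.mk ⟨c.proj v, c.d_proj v⟩ := rfl

lemma toCohomology_of_mem_ker {z : V} (hz : z ∈ LinearMap.ker d) :
    c.toCohomology z = Submodule.Quotient.mk ⟨z, hz⟩ := by
  have hsplit := c.proj_add_d_htpy_add_htpy_d z
  rw [LinearMap.mem_ker.mp hz, map_zero, add_zero] at hsplit
  rw [toCohomology_apply]
  refine (Submodule.Quotient.eq _).mpr ⟨-c.htpy z, ?_⟩
  show d (-c.htpy z) = c.proj z - z
  rw [map_neg, neg_eq_iff_eq_neg, neg_sub, eq_sub_iff_add_eq', hsplit]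

lemma toCohomology_d (v : V) : c.toCohomology (d v) = 0 :=
  (Submodule.Quotient.mk_eq_zero _).mpr ⟨0, (map_zero d).trans (c.proj_d v).symm⟩

def conj (M : V ≃ₗ[R] U) {dU : U →ₗ[R] U} (hM : ∀ v, dU (M v) = M (d v)) :
    Contraction dU where
  proj := M.toLinearMap ∘ₗ c.proj ∘ₗ M.symm.toLinearMap
  htpy := M.toLinearMap ∘ₗ c.htpy ∘ₗ M.symm.toLinearMap
  d_proj u := by simp [hM, c.d_proj]
  proj_d u := by
    rw [← M.apply_symm_apply u, hM]
    simp [c.proj_d]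
  proj_add_d_htpy_add_htpy_d u := by
    obtain ⟨v, rfl⟩ := M.surjective u
    simp only [LinearMap.comp_apply, LinearEquiv.coe_coe, hM, LinearEquiv.symm_apply_apply,
      ← map_add, c.proj_add_d_htpy_add_htpy_d]

def copy {d' : V →ₗ[R] V} (h : d' = d) : Contraction d' where
  proj := c.proj
  htpy := c.htpy
  d_proj := h ▸ c.d_proj
  proj_d := h ▸ c.proj_d
  proj_add_d_htpy_add_htpy_d := h ▸ c.proj_add_d_htpy_add_htpy_d

end Contraction

variable {dV : V →ₗ[R] V} {dW : W →ₗ[R] W} {dU : U →ₗ[R] U} {ε : V →ₗ[R] V}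

/-- The differential of the tensor product complex; `ε` is the parity involution of `V`, which
supplies the Koszul sign. -/
def tensorDiff (dV ε : V →ₗ[R] V) (dW : W →ₗ[R] W) : V ⊗[R] W →ₗ[R] V ⊗[R] W :=
  TensorProduct.map dV LinearMap.id + TensorProduct.map ε dW

@[simp]
lemma tensorDiff_tmul (v : V) (w : W) :
    tensorDiff dV ε dW (v ⊗ₜ w) = dV v ⊗ₜ w + ε v ⊗ₜ dW w := rfl

def Contraction.tensor (cV : Contraction dV) (cW : Contraction dW)
    (hεε : ∀ v, ε (ε v) = v) (hdε : ∀ v, dV (ε v) = -ε (dV v))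
    (hπε : ∀ v, cV.proj (ε v) = ε (cV.proj v)) (hεh : ∀ v, ε (cV.htpy v) = -cV.htpy (ε v)) :
    Contraction (tensorDiff dV ε dW) where
  proj := TensorProduct.map cV.proj cW.proj
  htpy := TensorProduct.map cV.htpy LinearMap.id + TensorProduct.map (ε ∘ₗ cV.proj) cW.htpy
  d_proj t := by
    induction t with
    | zero => simp
    | tmul v w => simp [cV.d_proj, cW.d_proj]
    | add t t' ht ht' => simp_all
  proj_d t := by
    induction t with
    | zero => simp
    | tmul v w => simp [cV.proj_d, cW.proj_d]
    | add t t' ht ht' => simp_all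
  proj_add_d_htpy_add_htpy_d t := by
    induction t with
    | zero => simp
    | tmul v w =>
      have hv := congrArg (· ⊗ₜ[R] w) (cV.proj_add_d_htpy_add_htpy_d v)
      have hw := congrArg (cV.proj v ⊗ₜ[R] ·) (cW.proj_add_d_htpy_add_htpy_d w)
      simp only [add_tmul, tmul_add] at hv hw
      simp only [LinearMap.add_apply, LinearMap.comp_apply, tensorDiff_tmul, map_add, map_tmul,
        LinearMap.id_apply, hεh, hdε, hεε, hπε, cV.d_proj, cV.proj_d, map_zero,
        neg_zero, neg_tmul, zero_tmul, add_zero, zero_add]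
      -- the cross terms `ε (hV v) ⊗ dW w` and `hV (ε v) ⊗ dW w` cancel
      rw [← hv, ← hw]
      abel
    | add t t' ht ht' =>
      conv_rhs => rw [← ht, ← ht']
      simp only [map_add]
      abel

variable (M : V ⊗[R] W ≃ₗ[R] U)

lemma tmul_mem_ker (hM : ∀ t, dU (M t) = M (tensorDiff dV ε dW t)) {v : V} {w : W}
    (hv : v ∈ LinearMap.ker dV) (hw : w ∈ LinearMap.ker dW) :
    M (v ⊗ₜ w) ∈ LinearMap.ker dU := by
  rw [LinearMap.mem_ker, hM, tensorDiff_tmul, LinearMap.mem_ker.mp hv, LinearMap.mem_ker.mp hw]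
  simp

def cocycleTensorMap (hM : ∀ t, dU (M t) = M (tensorDiff dV ε dW t)) :
    LinearMap.ker dV ⊗[R] LinearMap.ker dW →ₗ[R] LinearMap.ker dU :=
  (M.toLinearMap ∘ₗ TensorProduct.map (LinearMap.ker dV).subtype (LinearMap.ker dW).subtype)
    |>.codRestrict _ fun t => by
      induction t with
      | zero => simp
      | tmul v w => exact tmul_mem_ker M hM v.2 w.2
      | add t t' ht ht' => simpa using add_mem ht ht'

def kunnethMap (hM : ∀ t, dU (M t) = M (tensorDiff dV ε dW t))
    (hεε : ∀ v, ε (ε v) = v) (hdε : ∀ v, dV (ε v) = -ε (dV v)) :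
    Cohomology dV ⊗[R] Cohomology dW →ₗ[R] Cohomology dU :=
  Submodule.liftQ _ (Submodule.mkQ _ ∘ₗ cocycleTensorMap M hM) (sup_le
      (LinearMap.range_le_ker_iff.mpr <| TensorProduct.ext' fun ⟨v, hv⟩ w => by
        obtain ⟨v', hv'⟩ := hv
        refine (Submodule.Quotient.mk_eq_zero _).mpr ⟨M (v' ⊗ₜ w), ?_⟩
        simp [hM, hv', LinearMap.mem_ker.mp w.2, cocycleTensorMap])
      (LinearMap.range_le_ker_iff.mpr <| TensorProduct.ext' fun v ⟨w, hw⟩ => by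
        obtain ⟨w', hw'⟩ := hw
        refine (Submodule.Quotient.mk_eq_zero _).mpr ⟨M (ε v ⊗ₜ w'), ?_⟩
        simp [hM, hw', hεε, hdε, LinearMap.mem_ker.mp v.2, cocycleTensorMap]))
    ∘ₗ (quotientTensorQuotientEquiv _ _).toLinearMap

lemma kunnethMap_mk_tmul_mk (hM : ∀ t, dU (M t) = M (tensorDiff dV ε dW t))
    (hεε : ∀ v, ε (ε v) = v) (hdε : ∀ v, dV (ε v) = -ε (dV v)) (v : LinearMap.ker dV)
    (w : LinearMap.ker dW) :
    kunnethMap M hM hεε hdε (Submodule.Quotient.mk v ⊗ₜ Submodule.Quotient.mk w)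
      = Submodule.Quotient.mk ⟨M (v ⊗ₜ w), tmul_mem_ker M hM v.2 w.2⟩ := rfl

def kunnethInv (hM : ∀ t, dU (M t) = M (tensorDiff dV ε dW t)) (cV : Contraction dV)
    (cW : Contraction dW) : Cohomology dU →ₗ[R] Cohomology dV ⊗[R] Cohomology dW :=
  Submodule.liftQ _ (TensorProduct.map cV.toCohomology cW.toCohomology ∘ₗ M.symm.toLinearMap
      ∘ₗ (LinearMap.ker dU).subtype) fun ⟨u, hu⟩ ⟨u', hu'⟩ => by
    have hκ (t : V ⊗[R] W) :
        TensorProduct.map cV.toCohomology cW.toCohomology (tensorDiff dV ε dW t) = 0 := by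
      induction t with
      | zero => simp
      | tmul v w => simp [Contraction.toCohomology_d]
      | add t t' ht ht' => simp_all
    have hu : M.symm u = tensorDiff dV ε dW (M.symm u') := by
      rw [LinearEquiv.symm_apply_eq, ← hM, M.apply_symm_apply]
      exact hu'.symm
    simpa [hu] using hκ (M.symm u')

lemma kunnethInv_mk (hM : ∀ t, dU (M t) = M (tensorDiff dV ε dW t)) (cV : Contraction dV)
    (cW : Contraction dW) (u : LinearMap.ker dU) :
    kunnethInv M hM cV cW (Submodule.Quotient.mk u)
      = TensorProduct.map cV.toCohomology cW.toCohomology (M.symm u) := rfl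

lemma kunnethMap_comp_kunnethInv (hM : ∀ t, dU (M t) = M (tensorDiff dV ε dW t))
    (cV : Contraction dV) (cW : Contraction dW) (hεε : ∀ v, ε (ε v) = v)
    (hdε : ∀ v, dV (ε v) = -ε (dV v)) (hπε : ∀ v, cV.proj (ε v) = ε (cV.proj v))
    (hεh : ∀ v, ε (cV.htpy v) = -cV.htpy (ε v)) :
    kunnethMap M hM hεε hdε ∘ₗ kunnethInv M hM cV cW = LinearMap.id := by
  let cU := (cV.tensor cW hεε hdε hπε hεh).conj M hM
  have hκ (t : V ⊗[R] W) : kunnethMap M hM hεε hdε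
      (TensorProduct.map cV.toCohomology cW.toCohomology t) = cU.toCohomology (M t) := by
    induction t with
    | zero => simp
    | tmul v w =>
      simp only [map_tmul, Contraction.toCohomology_apply, kunnethMap_mk_tmul_mk]
      congr 1
      ext
      simp [cU, Contraction.conj, Contraction.tensor]
    | add t t' ht ht' => simp_all
  refine Submodule.linearMap_qext _ (LinearMap.ext fun ⟨u, hu⟩ => ?_)
  simp only [LinearMap.comp_apply, Submodule.mkQ_apply, kunnethInv_mk, hκ,
    LinearEquiv.apply_symm_apply]
  exact cU.toCohomology_of_mem_ker hu

lemma kunnethInv_comp_kunnethMap (hM : ∀ t, dU (M t) = M (tensorDiff dV ε dW t))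
    (cV : Contraction dV) (cW : Contraction dW) (hεε : ∀ v, ε (ε v) = v)
    (hdε : ∀ v, dV (ε v) = -ε (dV v)) :
    kunnethInv M hM cV cW ∘ₗ kunnethMap M hM hεε hdε = LinearMap.id := by
  refine TensorProduct.ext' fun x y => ?_
  induction x using Submodule.Quotient.induction_on with | H v => ?_
  induction y using Submodule.Quotient.induction_on with | H w => ?_
  simp [kunnethMap_mk_tmul_mk, kunnethInv_mk, Contraction.toCohomology_of_mem_ker]

theorem exists_kunnethEquiv (hM : ∀ t, dU (M t) = M (tensorDiff dV ε dW t))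
    (cV : Contraction dV) (cW : Contraction dW) (hεε : ∀ v, ε (ε v) = v)
    (hdε : ∀ v, dV (ε v) = -ε (dV v)) (hπε : ∀ v, cV.proj (ε v) = ε (cV.proj v))
    (hεh : ∀ v, ε (cV.htpy v) = -cV.htpy (ε v)) :
    ∃ Φ : Cohomology dV ⊗[R] Cohomology dW ≃ₗ[R] Cohomology dU,
      ∀ (v : LinearMap.ker dV) (w : LinearMap.ker dW),
        Φ (Submodule.Quotient.mk v ⊗ₜ Submodule.Quotient.mk w)
          = Submodule.Quotient.mk ⟨M (v ⊗ₜ w), tmul_mem_ker M hM v.2 w.2⟩ :=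
  ⟨.ofLinearMap _ _ (kunnethMap_comp_kunnethInv M hM cV cW hεε hdε hπε hεh)
    (kunnethInv_comp_kunnethMap M hM cV cW hεε hdε), fun _ _ => rfl⟩

end HomologicalAlgebra

section Cone

variable {R : Type*} [CommRing R] {A : Type*} [AddCommGroup A] [Module R A]

/-- The mapping cone of `f`: `ω = ω 0 + c ω 1` with `d c = f`, so `d ω = f (ω 1)`. -/
def coneDiff (f : A →ₗ[R] A) : (Fin 2 → A) →ₗ[R] Fin 2 → A :=
  LinearMap.pi ![f ∘ₗ LinearMap.proj 1, 0]

variable (R) in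
def coneParity : (Fin 2 → A) →ₗ[R] Fin 2 → A :=
  LinearMap.pi ![LinearMap.proj 0, -LinearMap.proj 1]

@[simp] lemma coneDiff_apply_zero (f : A →ₗ[R] A) (ω : Fin 2 → A) :
    coneDiff f ω 0 = f (ω 1) := rfl

@[simp] lemma coneDiff_apply_one (f : A →ₗ[R] A) (ω : Fin 2 → A) : coneDiff f ω 1 = 0 := rfl

@[simp] lemma coneParity_apply_zero (ω : Fin 2 → A) : coneParity R ω 0 = ω 0 := rfl

@[simp] lemma coneParity_apply_one (ω : Fin 2 → A) : coneParity R ω 1 = -ω 1 := rfl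

lemma coneParity_coneParity (ω : Fin 2 → A) : coneParity R (coneParity R ω) = ω := by
  ext i; fin_cases i <;> simp

lemma coneDiff_coneParity (f : A →ₗ[R] A) (ω : Fin 2 → A) :
    coneDiff f (coneParity R ω) = -coneParity R (coneDiff f ω) := by
  ext i; fin_cases i <;> simp

/-- For a generalized inverse `σ` of `f`, the cone of `f` contracts onto `coker f ⊕ c ker f`,
realised as the images of `1 - f σ` and `1 - σ f`. -/
def coneContraction (f σ : A →ₗ[R] A) (hσ : ∀ a, f (σ (f a)) = f a) :
    Contraction (coneDiff f) where
  proj := LinearMap.pi ![(LinearMap.id - f ∘ₗ σ) ∘ₗ LinearMap.proj 0,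
    (LinearMap.id - σ ∘ₗ f) ∘ₗ LinearMap.proj 1]
  htpy := LinearMap.pi ![0, σ ∘ₗ LinearMap.proj 0]
  d_proj ω := by ext i; fin_cases i <;> simp [coneDiff, hσ]
  proj_d ω := by ext i; fin_cases i <;> simp [coneDiff, hσ]
  proj_add_d_htpy_add_htpy_d ω := by ext i; fin_cases i <;> simp [coneDiff]

variable {f σ : A →ₗ[R] A} (hσ : ∀ a, f (σ (f a)) = f a)

lemma coneContraction_proj_coneParity (ω : Fin 2 → A) :
    (coneContraction f σ hσ).proj (coneParity R ω)
      = coneParity R ((coneContraction f σ hσ).proj ω) := by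
  ext i; fin_cases i <;> simp [coneContraction, neg_add_eq_sub]

lemma coneParity_coneContraction_htpy (ω : Fin 2 → A) :
    coneParity R ((coneContraction f σ hσ).htpy ω)
      = -(coneContraction f σ hσ).htpy (coneParity R ω) := by
  ext i; fin_cases i <;> simp [coneContraction]

end Cone

section FinTensor

variable {R : Type*} [CommRing R] {A B T : Type*} [AddCommGroup A] [Module R A]
  [AddCommGroup B] [Module R B] [AddCommGroup T] [Module R T]

/-- The component `e (a i ⊗ b j)` of `a ⊗ b` sits at index `i + 2 j`. -/
def finTwoTensorEquiv (e : A ⊗[R] B ≃ₗ[R] T) : (Fin 2 → A) ⊗[R] (Fin 2 → B) ≃ₗ[R] Fin 4 → T :=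
  TensorProduct.congr (Finsupp.linearEquivFunOnFinite R A (Fin 2)).symm
      (Finsupp.linearEquivFunOnFinite R B (Fin 2)).symm
    ≪≫ₗ finsuppTensorFinsupp R R A B (Fin 2) (Fin 2)
    ≪≫ₗ Finsupp.linearEquivFunOnFinite R (A ⊗[R] B) (Fin 2 × Fin 2)
    ≪≫ₗ LinearEquiv.funCongrLeft R (A ⊗[R] B) (finProdFinEquiv.symm.trans (Equiv.prodComm _ _))
    ≪≫ₗ LinearEquiv.piCongrRight fun _ => e

lemma finTwoTensorEquiv_tmul (e : A ⊗[R] B ≃ₗ[R] T) (a : Fin 2 → A) (b : Fin 2 → B) :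
    finTwoTensorEquiv e (a ⊗ₜ b)
      = ![e (a 0 ⊗ₜ b 0), e (a 1 ⊗ₜ b 0), e (a 0 ⊗ₜ b 1), e (a 1 ⊗ₜ b 1)] := by
  have hidx : ∀ k : Fin (2 * 2),
      (finProdFinEquiv.symm k).swap = ![(0, 0), (1, 0), (0, 1), (1, 1)] k := by
    decide
  ext k
  fin_cases k <;> simp [finTwoTensorEquiv, hidx]

end FinTensor

lemma LinearMap.exists_generalizedInverse {K V V' : Type*} [Field K] [AddCommGroup V]
    [Module K V] [AddCommGroup V'] [Module K V'] (f : V →ₗ[K] V') :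
    ∃ σ : V' →ₗ[K] V, ∀ v, f (σ (f v)) = f v := by
  obtain ⟨s, hs⟩ := f.rangeRestrict.exists_rightInverse_of_surjective f.range_rangeRestrict
  obtain ⟨p, hp⟩ := (LinearMap.range f).subtype.exists_leftInverse_of_injective
    (Submodule.ker_subtype _)
  refine ⟨s ∘ₗ p, fun v => ?_⟩
  have hpf : p (f v) = f.rangeRestrict v := LinearMap.congr_fun hp (f.rangeRestrict v)
  simpa [hpf] using congrArg Subtype.val (LinearMap.congr_fun hs (f.rangeRestrict v))

lemma MvPolynomial.tensorEquivSum_tmul {R σ ι : Type*} [CommRing R] (x : MvPolynomial σ R)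
    (y : MvPolynomial ι R) :
    tensorEquivSum R σ ι R (x ⊗ₜ y) = rename Sum.inl x * rename Sum.inr y := by
  have h : (tensorEquivSum R σ ι R).toAlgHom
      = Algebra.TensorProduct.productMap (rename Sum.inl) (rename Sum.inr) := by
    ext <;> simp
  simpa using congr($h (x ⊗ₜ y))

lemma finTwoTensorEquiv_tensorEquivSum_tmul {Np Nm : ℕ} (a : Omp Np) (b : Omm Nm) :
    finTwoTensorEquiv (tensorEquivSum ℂ (Fin Np) (Fin Nm) ℂ).toLinearEquiv (a ⊗ₜ b)
      = mul2 a b := by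
  simp [finTwoTensorEquiv_tmul, MvPolynomial.tensorEquivSum_tmul, mul2]

lemma dpL_eq_coneDiff (Np : ℕ) : dpL Np = coneDiff (LinearMap.mulLeft ℂ (Ppl Np)) := by
  refine LinearMap.ext fun ω => funext fun i => ?_
  fin_cases i <;> rfl

lemma dmL_eq_coneDiff (Nm : ℕ) : dmL Nm = coneDiff (LinearMap.mulLeft ℂ (Qmi Nm)) := by
  refine LinearMap.ext fun ω => funext fun i => ?_
  fin_cases i <;> rfl

lemma d2L_mul2 {Np Nm : ℕ} (a : Omp Np) (b : Omm Nm) :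
    d2L Np Nm (mul2 a b) = mul2 (dpL Np a) b + mul2 (coneParity ℂ a) (dmL Nm b) := by
  ext k
  fin_cases k <;> simp [d2L, mul2, dpL, dmL, ← renP, ← renQ] <;> ring

lemma d2L_finTwoTensorEquiv {Np Nm : ℕ} (t : Omp Np ⊗[ℂ] Omm Nm) :
    d2L Np Nm (finTwoTensorEquiv (tensorEquivSum ℂ (Fin Np) (Fin Nm) ℂ).toLinearEquiv t)
      = finTwoTensorEquiv (tensorEquivSum ℂ (Fin Np) (Fin Nm) ℂ).toLinearEquiv
          (tensorDiff (dpL Np) (coneParity ℂ) (dmL Nm) t) := by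
  induction t with
  | zero => simp
  | tmul a b => simp [finTwoTensorEquiv_tensorEquivSum_tmul, d2L_mul2]
  | add t t' ht ht' => simp_all

/-- Künneth formula: the multiplication map induces a well-defined
`ℂ`-linear isomorphism `H(Ω₊) ⊗ H(Ω₋) ≃ H(Ω)`, `[ω₊] ⊗ [ω₋] ↦ [ω₊ω₋]`. -/
theorem stmt18 (Np Nm : ℕ) :
    ∃ f : (TensorProduct ℂ (Hp Np) (Hm Nm)) ≃ₗ[ℂ] H2 Np Nm,
      ∀ (a : Omp Np) (b : Omm Nm) (ha : dpL Np a = 0) (hb : dmL Nm b = 0),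
        f (clsp a ha ⊗ₜ[ℂ] clsm b hb) = cls2 (mul2 a b) (mul2_ker ha hb) := by
  obtain ⟨σp, hσp⟩ := (LinearMap.mulLeft ℂ (Ppl Np)).exists_generalizedInverse
  obtain ⟨σm, hσm⟩ := (LinearMap.mulLeft ℂ (Qmi Nm)).exists_generalizedInverse
  obtain ⟨Φ, hΦ⟩ := exists_kunnethEquiv _ d2L_finTwoTensorEquiv
    ((coneContraction _ σp hσp).copy (dpL_eq_coneDiff Np))
    ((coneContraction _ σm hσm).copy (dmL_eq_coneDiff Nm)) coneParity_coneParity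
    (by simp [dpL_eq_coneDiff, coneDiff_coneParity]) (coneContraction_proj_coneParity hσp)
    (coneParity_coneContraction_htpy hσp)
  refine ⟨Φ, fun a b ha hb => (hΦ _ _).trans ?_⟩
  exact congrArg _ (Subtype.ext (finTwoTensorEquiv_tensorEquivSum_tmul a b))
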